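/- arXiv:1310.5648 — 3 statements merged into one kernel-verified Lean document; each statement's English description precedes it below -/
import Mathlib

section
/- If a finite-dimensional complex representation of a group is both unipotent (every element acts by a unipotent endomorphism) and irreducible, then the representation is one-dimensional and trivial (every group element acts as the identity). -/
open LinearMap Module

attribute [local instance 100] LieRing.ofAssociativeRing

lemma exists_common_zero
    {V : Type*} [AddCommGroup V] [Module ℂ V] [FiniteDimensional ℂ V] [Nontrivial V]
    (U : Submodule ℂ (Module.End ℂ V))
    (hmul : ∀ x ∈ U, ∀ y ∈ U, x * y ∈ U)
    (hnil : ∀ x ∈ U, IsNilpotent x) :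
    ∃ v : V, v ≠ 0 ∧ ∀ x ∈ U, x v = 0 := by
  have hlie : ∀ {x y : Module.End ℂ V}, x ∈ U → y ∈ U → ⁅x, y⁆ ∈ U := by
    intro x y hx hy
    simpa [LieRing.of_associative_ring_bracket] using
      U.sub_mem (hmul x hx y hy) (hmul y hy x hx)
  let K : LieSubalgebra ℂ (Module.End ℂ V) := { U with lie_mem' := hlie }
  have hnilK : ∀ x : K, IsNilpotent (LieModule.toEnd ℂ K V x) := by
    intro x
    have hx : (LieModule.toEnd ℂ K V x : Module.End ℂ V) = (x : Module.End ℂ V) := by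
      ext v; simp [LieModule.toEnd]
    rw [hx]
    exact hnil x x.2
  have hN : LieModule.IsNilpotent K V := by
    rw [LieModule.isNilpotent_iff_forall' (R := ℂ)]
    exact hnilK
  have hnt := LieModule.nontrivial_max_triv_of_isNilpotent ℂ K V
  obtain ⟨⟨v, hv⟩, hne⟩ := exists_ne (0 : LieModule.maxTrivSubmodule ℂ K V)
  refine ⟨v, ?_, ?_⟩
  · intro h
    exact hne (by ext; simpa using h)
  · intro x hx
    have := hv ⟨x, hx⟩
    simpa using this


open LinearMap Module

lemma trace_eq_zero_of_nilpotent
    {V : Type*} [AddCommGroup V] [Module ℂ V] [FiniteDimensional ℂ V]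
    {f : Module.End ℂ V} (h : IsNilpotent f) : trace ℂ V f = 0 := by
  have := LinearMap.isNilpotent_trace_of_isNilpotent h
  rwa [isNilpotent_iff_eq_zero] at this

lemma isNilpotent_of_forall_trace_pow
    {V : Type*} [AddCommGroup V] [Module ℂ V] [FiniteDimensional ℂ V]
    (f : Module.End ℂ V) (h : ∀ n : ℕ, 0 < n → trace ℂ V (f ^ n) = 0) :
    IsNilpotent f := by
  cases subsingleton_or_nontrivial V
  · exact ⟨1, Subsingleton.elim _ _⟩
  set E := f.maxGenEigenspace with hE
  have hindep := f.independent_maxGenEigenspace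
  have hsup := Module.End.iSup_maxGenEigenspace_eq_top f
  have hInt : DirectSum.IsInternal E :=
    DirectSum.isInternal_submodule_of_iSupIndep_of_iSup_eq_top hindep hsup
  have hfin : {μ : ℂ | E μ ≠ ⊥}.Finite := by
    apply f.finite_hasEigenvalue.subset
    intro μ hμ
    have h2 : f.genEigenspace μ (finrank ℂ V) ≠ ⊥ := by
      rw [← Module.End.maxGenEigenspace_eq_genEigenspace_finrank]; exact hμ
    exact Module.End.hasEigenvalue_of_hasGenEigenvalue (k := finrank ℂ V) h2
  have hmaps : ∀ (n : ℕ) (μ : ℂ), Set.MapsTo (f ^ n) (E μ) (E μ) := fun n μ =>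
    Module.End.mapsTo_maxGenEigenspace_of_comm ((Commute.refl f).pow_right n) μ
  have hmapsTo : ∀ μ : ℂ, ∀ x ∈ E μ, f x ∈ E μ := by
    intro μ x hx
    simpa using hmaps 1 μ hx
  -- trace of f^n restricted to E μ is μ^n * dim
  have key : ∀ (n : ℕ) (μ : ℂ), trace ℂ (E μ) ((f ^ n).restrict (hmaps n μ)) =
      μ ^ n * (finrank ℂ (E μ) : ℂ) := by
    intro n μ
    have h1 : (f ^ n).restrict (hmaps n μ) = (f.restrict (hmapsTo μ)) ^ n := by
      rw [Module.End.pow_restrict]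
    rw [h1]
    set g := f.restrict (hmapsTo μ) with hg
    set N := g - μ • 1 with hN
    have hNnil : IsNilpotent N := by
      have h3 := Module.End.isNilpotent_restrict_maxGenEigenspace_sub_algebraMap f μ
      have h4 : (f - algebraMap ℂ (Module.End ℂ V) μ).restrict
          (Module.End.mapsTo_maxGenEigenspace_of_comm
            (Algebra.mul_sub_algebraMap_commutes f μ) μ) = N := by
        ext x
        simp [hN, hg, LinearMap.restrict_apply, Module.algebraMap_end_apply]
        exact (LinearMap.restrict_coe_apply _ _ x).trans (by simp [Module.algebraMap_end_apply])
      rwa [h4] at h3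
    have hcom : Commute (μ • (1 : Module.End ℂ (E μ))) N :=
      (Commute.one_left N).smul_left μ
    have hgN : g = μ • 1 + N := by rw [hN]; abel
    rw [hgN, hcom.add_pow, map_sum, Finset.sum_eq_single n]
    · simp [smul_pow, trace_one]
    · intro i hi hne
      have hlt : i < n := lt_of_le_of_ne (Nat.lt_succ_iff.mp (Finset.mem_range.mp hi)) hne
      have hNi : IsNilpotent (N ^ (n - i)) :=
        hNnil.pow_of_pos (Nat.sub_pos_of_lt hlt).ne'
      have heq : (μ • (1 : Module.End ℂ (E μ))) ^ i * N ^ (n - i) * (n.choose i : Module.End ℂ (E μ))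
          = (μ ^ i * (n.choose i : ℂ)) • (N ^ (n - i)) := by
        simp [smul_pow, mul_smul, Nat.cast_smul_eq_nsmul, (Nat.commute_cast (N ^ (n-i)) (n.choose i)).eq]
      rw [heq, map_smul, trace_eq_zero_of_nilpotent hNi, smul_zero]
    · intro hn
      exact absurd (Finset.self_mem_range_succ n) hn
  -- sum of eigenvalue powers weighted by dimensions vanishes
  have hsums : ∀ n : ℕ, 0 < n →
      ∑ μ ∈ hfin.toFinset, μ ^ n * (finrank ℂ (E μ) : ℂ) = 0 := by
    intro n hn
    rw [← h n hn, LinearMap.trace_eq_sum_trace_restrict' hInt hfin (hmaps n)]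
    exact Finset.sum_congr rfl fun μ _ => (key n μ).symm
  have hpoly : ∀ p : Polynomial ℂ,
      ∑ μ ∈ hfin.toFinset, (finrank ℂ (E μ) : ℂ) * (μ * p.eval μ) = 0 := by
    intro p
    induction p using Polynomial.induction_on' with
    | add p q hp hq =>
      simp only [Polynomial.eval_add, mul_add, Finset.sum_add_distrib, hp, hq, add_zero]
    | monomial n a =>
      have := hsums (n + 1) n.succ_pos
      calc ∑ μ ∈ hfin.toFinset, (finrank ℂ (E μ) : ℂ) * (μ * (Polynomial.monomial n a).eval μ)
          = a * ∑ μ ∈ hfin.toFinset, μ ^ (n + 1) * (finrank ℂ (E μ) : ℂ) := by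
            rw [Finset.mul_sum]
            exact Finset.sum_congr rfl fun μ _ => by
              simp [Polynomial.eval_monomial, pow_succ]; ring
        _ = 0 := by rw [this, mul_zero]
  have hzero : ∀ μ : ℂ, μ ≠ 0 → E μ = ⊥ := by
    intro μ0 hμ0
    by_contra hne
    have hmem : μ0 ∈ hfin.toFinset := by simpa using hne
    set p : Polynomial ℂ := ∏ ν ∈ hfin.toFinset.erase μ0, (Polynomial.X - Polynomial.C ν) with hp
    have hpe : ∀ ν ∈ hfin.toFinset, ν ≠ μ0 → p.eval ν = 0 := by
      intro ν hν hνne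
      rw [hp, Polynomial.eval_prod]
      exact Finset.prod_eq_zero (Finset.mem_erase.mpr ⟨hνne, hν⟩) (by simp)
    have hpμ0 : p.eval μ0 ≠ 0 := by
      rw [hp, Polynomial.eval_prod]
      apply Finset.prod_ne_zero_iff.mpr
      intro ν hν
      have : ν ≠ μ0 := (Finset.mem_erase.mp hν).1
      simpa [sub_eq_zero] using fun hc => this hc.symm
    have h5 := hpoly p
    rw [Finset.sum_eq_single μ0] at h5
    · rcases mul_eq_zero.mp h5 with h6 | h6
      · exact hne (Submodule.finrank_eq_zero.mp (by exact_mod_cast h6))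
      · rcases mul_eq_zero.mp h6 with h7 | h7
        · exact hμ0 h7
        · exact hpμ0 h7
    · intro ν hν hνne
      rw [hpe ν hν hνne, mul_zero, mul_zero]
    · intro hc
      exact absurd hmem hc
  have htop : E 0 = ⊤ := by
    rw [← top_le_iff, ← hsup]
    apply iSup_le
    intro μ
    by_cases hμ : μ = 0
    · subst hμ; exact le_rfl
    · rw [hE] at hzero ⊢
      rw [hzero μ hμ]
      exact bot_le
  refine ⟨finrank ℂ V, ?_⟩
  ext v
  have hv : v ∈ E 0 := htop ▸ Submodule.mem_top
  rw [hE, Module.End.maxGenEigenspace_eq_genEigenspace_finrank,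
    Module.End.mem_genEigenspace_nat] at hv
  simpa using hv


/-- A finite-dimensional complex representation that is both
unipotent (every `ρ g - 1` is nilpotent) and irreducible (no proper nonzero
invariant subspace, `V ≠ 0`) is one-dimensional and trivial. -/
theorem unipotent_irreducible_is_trivial
    {G : Type*} [Group G] {V : Type*} [AddCommGroup V] [Module ℂ V]
    [FiniteDimensional ℂ V] [Nontrivial V]
    (ρ : Representation ℂ G V)
    (hunip : ∀ g : G, IsNilpotent (ρ g - 1))
    (hirr : ∀ p : Submodule ℂ V, (∀ g : G, ∀ v ∈ p, ρ g v ∈ p) → p = ⊥ ∨ p = ⊤) :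
    Module.finrank ℂ V = 1 ∧ ∀ g : G, ρ g = LinearMap.id := by
  classical
  set S : Set (Module.End ℂ V) := {x | ∃ g : G, x = ρ g - 1} with hS
  set U : Submodule ℂ (Module.End ℂ V) := Submodule.span ℂ S with hU
  have hgen : ∀ g : G, (ρ g - 1 : Module.End ℂ V) ∈ U :=
    fun g => Submodule.subset_span ⟨g, rfl⟩
  -- U is closed under multiplication
  have hmulS : ∀ x ∈ S, ∀ y ∈ S, x * y ∈ U := by
    rintro x ⟨g, rfl⟩ y ⟨h, rfl⟩
    have hexp : (ρ g - 1) * (ρ h - 1) = (ρ (g * h) - 1) - (ρ g - 1) - (ρ h - 1) := by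
      have : (ρ (g * h) : Module.End ℂ V) = ρ g * ρ h := map_mul ρ g h
      rw [this]; noncomm_ring
    rw [hexp]
    exact U.sub_mem (U.sub_mem (hgen _) (hgen _)) (hgen _)
  have hmul : ∀ x ∈ U, ∀ y ∈ U, x * y ∈ U := by
    intro x hx y hy
    induction hx using Submodule.span_induction with
    | mem a ha =>
      induction hy using Submodule.span_induction with
      | mem b hb => exact hmulS a ha b hb
      | zero => simpa using U.zero_mem
      | add b c _ _ hb hc => rw [mul_add]; exact U.add_mem hb hc
      | smul c b _ hb => rw [mul_smul_comm]; exact U.smul_mem c hb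
    | zero => simpa using U.zero_mem
    | add a b _ _ ha hb => rw [add_mul]; exact U.add_mem ha hb
    | smul c a _ ha => rw [smul_mul_assoc]; exact U.smul_mem c ha
  -- every element of U has trace zero
  have htr : ∀ x ∈ U, trace ℂ V x = 0 := by
    intro x hx
    induction hx using Submodule.span_induction with
    | mem a ha =>
      obtain ⟨g, rfl⟩ := ha
      exact trace_eq_zero_of_nilpotent (hunip g)
    | zero => simp
    | add a b _ _ ha hb => rw [map_add, ha, hb, add_zero]
    | smul c a _ ha => rw [map_smul, ha, smul_zero]
  -- hence every element of U is nilpotent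
  have hnil : ∀ x ∈ U, IsNilpotent x := by
    intro x hx
    apply isNilpotent_of_forall_trace_pow
    intro n hn
    have hpow : ∀ m : ℕ, x ^ (m + 1) ∈ U := by
      intro m
      induction m with
      | zero => simpa using hx
      | succ m ih => rw [pow_succ]; exact hmul _ ih x hx
    obtain ⟨m, rfl⟩ := Nat.exists_eq_succ_of_ne_zero hn.ne'
    exact htr _ (hpow m)
  -- common fixed vector
  obtain ⟨v, hv0, hvfix⟩ := exists_common_zero U hmul hnil
  -- the fixed subspace
  let F : Submodule ℂ V :=
    { carrier := {w | ∀ g : G, ρ g w = w}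
      add_mem' := fun {a b} ha hb g => by rw [map_add, ha g, hb g]
      zero_mem' := fun g => map_zero (ρ g)
      smul_mem' := fun c {a} ha g => by rw [map_smul, ha g] }
  have hvF : v ∈ F := by
    intro g
    have := hvfix (ρ g - 1) (hgen g)
    have h2 : ρ g v - v = 0 := by simpa using this
    exact sub_eq_zero.mp h2
  have hFinv : ∀ g : G, ∀ w ∈ F, ρ g w ∈ F := by
    intro g w hw
    rw [hw g]
    exact hw
  have hFtop : F = ⊤ := by
    rcases hirr F hFinv with hbot | htop
    · rw [hbot] at hvF
      exact absurd ((Submodule.mem_bot ℂ).mp hvF) hv0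
    · exact htop
  have hfix : ∀ (g : G) (w : V), ρ g w = w := by
    intro g w
    have : w ∈ F := hFtop ▸ Submodule.mem_top
    exact this g
  constructor
  · obtain ⟨v₀, hv₀⟩ := exists_ne (0 : V)
    have hsp : (ℂ ∙ v₀) = ⊤ := by
      rcases hirr (ℂ ∙ v₀) (fun g w hw => by rw [hfix g w]; exact hw) with hbot | htop
      · exact absurd hbot (by simpa [Submodule.span_singleton_eq_bot] using hv₀)
      · exact htop
    rw [← finrank_top ℂ V, ← hsp]
    exact finrank_span_singleton hv₀
  · intro g
    ext w
    simpa using hfix g w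
end

section
/- The shuffle product formula for iterated integrals of 1-forms: for piecewise smooth path γ in a manifold and 1-forms w₁,…,w_{r+s}, one has (∫_γ w₁⋯w_r)·(∫_γ w_{r+1}⋯w_{r+s}) = Σ_{σ ∈ Sh(r,s)} ∫_γ w_{σ⁻¹(1)}⋯w_{σ⁻¹(r+s)}, where Sh(r,s) denotes the set of (r,s)-shuffles. -/
/-- The iterated integral `∫_γ w₁ ⋯ w_r` of 1-forms `w i` along a path
`γ : [0,1] → E`, i.e. the integral of `∏ i, w i (γ(t_i))(γ'(t_i))` over the
simplex `0 ≤ t₁ ≤ ⋯ ≤ t_r ≤ 1`. -/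
noncomputable def iteratedIntegral {E : Type*} [NormedAddCommGroup E]
    [NormedSpace ℝ E] (r : ℕ) (w : Fin r → (E → E →L[ℝ] ℝ)) (γ : ℝ → E) : ℝ :=
  ∫ t in {t : Fin r → ℝ |
      (∀ i, 0 ≤ t i ∧ t i ≤ 1) ∧ ∀ i j : Fin r, i ≤ j → t i ≤ t j},
    ∏ i, w i (γ (t i)) (deriv γ (t i))

open MeasureTheory Set Function

namespace IterShuffle

variable {E : Type*} [NormedAddCommGroup E] [NormedSpace ℝ E]

/-- The integrand of the iterated integral. -/
noncomputable def F (n : ℕ) (w : Fin n → (E → E →L[ℝ] ℝ)) (γ : ℝ → E) :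
    (Fin n → ℝ) → ℝ :=
  fun t => ∏ i, w i (γ (t i)) (deriv γ (t i))

/-- The domain `{t | 0 ≤ t(σ⁻¹ 1) ≤ ⋯ ≤ t(σ⁻¹ n) ≤ 1}`. -/
def shufSet (n : ℕ) (σ : Equiv.Perm (Fin n)) : Set (Fin n → ℝ) :=
  {t | (∀ i, 0 ≤ t i ∧ t i ≤ 1) ∧ ∀ i j : Fin n, i ≤ j → t (σ⁻¹ i) ≤ t (σ⁻¹ j)}

/-- The strict version of `shufSet`. -/
def shufSetS (n : ℕ) (σ : Equiv.Perm (Fin n)) : Set (Fin n → ℝ) :=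
  {t | (∀ i, 0 ≤ t i ∧ t i ≤ 1) ∧ ∀ i j : Fin n, i < j → t (σ⁻¹ i) < t (σ⁻¹ j)}

/-- The union of the diagonals, a null set. -/
def bigN (n : ℕ) : Set (Fin n → ℝ) :=
  ⋃ (p : Fin n × Fin n) (_ : p.1 ≠ p.2), {t : Fin n → ℝ | t p.1 = t p.2}

/-- `(r,s)`-shuffles. -/
def isShuffle (r s : ℕ) (σ : Equiv.Perm (Fin (r + s))) : Prop :=
  ∀ i j : Fin (r + s), i < j → ((j : ℕ) < r ∨ r ≤ (i : ℕ)) → σ i < σ j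

instance isShuffleDec (r s : ℕ) : DecidablePred (isShuffle r s) := fun σ => by
  unfold isShuffle; infer_instance

/-- The set corresponding to the product of the two simplices. -/
def bigT (r s : ℕ) : Set (Fin (r + s) → ℝ) :=
  {t | (∀ i, 0 ≤ t i ∧ t i ≤ 1) ∧
    ∀ i j : Fin (r + s), i ≤ j → ((j : ℕ) < r ∨ r ≤ (i : ℕ)) → t i ≤ t j}

lemma contF (n : ℕ) (w : Fin n → (E → E →L[ℝ] ℝ)) (γ : ℝ → E)
    (hw : ∀ i, Continuous fun p : E × E => w i p.1 p.2) (hγ : ContDiff ℝ 1 γ) :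
    Continuous (F n w γ) := by
  apply continuous_finset_prod
  intro i _
  exact (hw i).comp (((hγ.continuous.comp (continuous_apply i))).prodMk
    ((hγ.continuous_deriv le_rfl).comp (continuous_apply i)))

lemma isClosed_shufSet (n : ℕ) (σ : Equiv.Perm (Fin n)) : IsClosed (shufSet n σ) := by
  have : shufSet n σ = (⋂ i, ((fun t : Fin n → ℝ => t i) ⁻¹' Icc 0 1)) ∩
      ⋂ (i) (j) (_ : i ≤ j), {t : Fin n → ℝ | t (σ⁻¹ i) ≤ t (σ⁻¹ j)} := by
    ext t
    simp only [shufSet, mem_setOf_eq, mem_inter_iff, mem_iInter, mem_preimage, mem_Icc]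
  rw [this]
  refine IsClosed.inter (isClosed_iInter fun i => isClosed_Icc.preimage (continuous_apply i)) ?_
  exact isClosed_iInter fun i => isClosed_iInter fun j => isClosed_iInter fun _ =>
    isClosed_le (continuous_apply _) (continuous_apply _)

lemma isCompact_shufSet (n : ℕ) (σ : Equiv.Perm (Fin n)) : IsCompact (shufSet n σ) := by
  refine IsCompact.of_isClosed_subset (isCompact_Icc (a := (0 : Fin n → ℝ)) (b := 1))
    (isClosed_shufSet n σ) ?_
  intro t ht
  constructor <;> intro i
  · exact (ht.1 i).1
  · exact (ht.1 i).2

lemma measurableSet_shufSetS (n : ℕ) (σ : Equiv.Perm (Fin n)) :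
    MeasurableSet (shufSetS n σ) := by
  have : shufSetS n σ = {t : Fin n → ℝ | ∀ i, 0 ≤ t i ∧ t i ≤ 1} ∩
      ⋂ (i) (j) (_ : i < j), {t : Fin n → ℝ | t (σ⁻¹ i) < t (σ⁻¹ j)} := by
    ext t
    simp only [shufSetS, mem_setOf_eq, mem_inter_iff, mem_iInter]
  rw [this]
  refine MeasurableSet.inter ?_ ?_
  · have : {t : Fin n → ℝ | ∀ i, 0 ≤ t i ∧ t i ≤ 1} =
        ⋂ i, ((fun t : Fin n → ℝ => t i) ⁻¹' Icc 0 1) := by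
      ext t; simp [mem_Icc]
    rw [this]
    exact MeasurableSet.iInter fun i => (measurableSet_Icc).preimage (measurable_pi_apply i)
  · exact MeasurableSet.iInter fun i => MeasurableSet.iInter fun j =>
      MeasurableSet.iInter fun _ =>
        measurableSet_lt (measurable_pi_apply _) (measurable_pi_apply _)

lemma shufSetS_subset (n : ℕ) (σ : Equiv.Perm (Fin n)) : shufSetS n σ ⊆ shufSet n σ := by
  rintro t ⟨h1, h2⟩
  refine ⟨h1, fun i j hij => ?_⟩
  rcases eq_or_lt_of_le hij with rfl | h
  · exact le_refl _
  · exact (h2 i j h).le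

lemma null_pair (n : ℕ) (i j : Fin n) (hij : i ≠ j) :
    volume {t : Fin n → ℝ | t i = t j} = 0 := by
  have hset : {t : Fin n → ℝ | t i = t j} =
      (LinearMap.ker ((LinearMap.proj i : (Fin n → ℝ) →ₗ[ℝ] ℝ) - LinearMap.proj j) : Set _) := by
    ext t
    simp [LinearMap.mem_ker, sub_eq_zero]
  rw [hset]
  apply MeasureTheory.Measure.addHaar_submodule
  intro htop
  have h1 : (Pi.single i 1 : Fin n → ℝ) ∈
      LinearMap.ker ((LinearMap.proj i : (Fin n → ℝ) →ₗ[ℝ] ℝ) - LinearMap.proj j) := by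
    rw [htop]; trivial
  have h2 : (1 : ℝ) - 0 = 0 := by
    simp only [LinearMap.mem_ker, LinearMap.sub_apply, LinearMap.proj_apply] at h1
    rwa [Pi.single_eq_same, Pi.single_eq_of_ne (Ne.symm hij)] at h1
  norm_num at h2

lemma null_bigN (n : ℕ) : volume (bigN n) = 0 :=
  measure_iUnion_null fun p => measure_iUnion_null fun hp => null_pair n p.1 p.2 hp

lemma iteratedIntegral_eq (n : ℕ) (w : Fin n → (E → E →L[ℝ] ℝ)) (γ : ℝ → E) :
    iteratedIntegral n w γ = ∫ t in shufSet n 1, F n w γ t :=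
  rfl

lemma iteratedIntegral_perm (n : ℕ) (w : Fin n → (E → E →L[ℝ] ℝ)) (γ : ℝ → E)
    (σ : Equiv.Perm (Fin n)) :
    iteratedIntegral n (fun i => w (σ⁻¹ i)) γ = ∫ t in shufSet n σ, F n w γ t := by
  classical
  set ψ := MeasurableEquiv.piCongrLeft (fun _ : Fin n => ℝ) (σ : Fin n ≃ Fin n) with hψdef
  have hmp : MeasurePreserving ψ volume volume :=
    MeasureTheory.volume_measurePreserving_piCongrLeft (fun _ => ℝ) σ
  have hψapp : ∀ (y : Fin n → ℝ) (i : Fin n), ψ y i = y (σ⁻¹ i) := by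
    intro y i
    have h := Equiv.piCongrLeft_apply_apply (P := fun _ : Fin n => ℝ)
      (e := (σ : Fin n ≃ Fin n)) y (σ⁻¹ i)
    have h2 : (σ : Fin n ≃ Fin n) (σ⁻¹ i) = i := Equiv.apply_symm_apply σ i
    rw [h2] at h
    simpa [hψdef, MeasurableEquiv.piCongrLeft] using h
  have hemb := ψ.measurableEmbedding
  have hkey := hmp.setIntegral_preimage_emb hemb (F n (fun i => w (σ⁻¹ i)) γ) (shufSet n 1)
  have hset : ψ ⁻¹' shufSet n 1 = shufSet n σ := by
    ext x
    simp only [mem_preimage, shufSet, mem_setOf_eq, hψapp, inv_one, Equiv.Perm.coe_one, id_eq]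
    constructor
    · rintro ⟨h1, h2⟩
      refine ⟨fun i => by simpa using h1 (σ i), h2⟩
    · rintro ⟨h1, h2⟩
      exact ⟨fun i => h1 _, h2⟩
  have hfun : ∀ x : Fin n → ℝ, F n (fun i => w (σ⁻¹ i)) γ (ψ x) = F n w γ x := by
    intro x
    show (∏ i, w (σ⁻¹ i) (γ (ψ x i)) (deriv γ (ψ x i))) = _
    simp only [hψapp]
    exact Equiv.prod_comp (σ⁻¹ : Equiv.Perm (Fin n))
      (fun k => w k (γ (x k)) (deriv γ (x k)))
  rw [iteratedIntegral_eq, ← hkey, hset]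
  simp only [hfun]

lemma shufSet_diff_subset (n : ℕ) (σ : Equiv.Perm (Fin n)) :
    shufSet n σ \ shufSetS n σ ⊆ bigN n := by
  rintro t ⟨⟨h1, h2⟩, hns⟩
  simp only [shufSetS, mem_setOf_eq, not_and, not_forall] at hns
  obtain ⟨i, j, hij, hnlt⟩ := hns h1
  have heq : t (σ⁻¹ i) = t (σ⁻¹ j) := le_antisymm (h2 i j hij.le) (not_lt.1 hnlt)
  have hne : σ⁻¹ i ≠ σ⁻¹ j := fun h => hij.ne (σ⁻¹.injective h)
  exact mem_iUnion.2 ⟨(σ⁻¹ i, σ⁻¹ j), mem_iUnion.2 ⟨hne, heq⟩⟩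

lemma shufSet_ae_eq (n : ℕ) (σ : Equiv.Perm (Fin n)) :
    shufSet n σ =ᵐ[(volume : Measure (Fin n → ℝ))] shufSetS n σ := by
  rw [MeasureTheory.ae_eq_set]
  constructor
  · exact measure_mono_null (shufSet_diff_subset n σ) (null_bigN n)
  · rw [diff_eq_empty.2 (shufSetS_subset n σ)]
    exact measure_empty

lemma shufSetS_disjoint (n : ℕ) {σ τ : Equiv.Perm (Fin n)} (hστ : σ ≠ τ) :
    Disjoint (shufSetS n σ) (shufSetS n τ) := by
  rw [Set.disjoint_left]
  intro t htσ htτ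
  have hfs : StrictMono (fun i => t (σ⁻¹ i)) := fun i j h => htσ.2 i j h
  have hgt : StrictMono (fun i => t (τ⁻¹ i)) := fun i j h => htτ.2 i j h
  have hrange : Set.range (fun i => t (σ⁻¹ i)) = Set.range (fun i => t (τ⁻¹ i)) := by
    have h1 : Set.range (t ∘ ⇑σ⁻¹) = Set.range t := (σ⁻¹).surjective.range_comp t
    have h2 : Set.range (t ∘ ⇑τ⁻¹) = Set.range t := (τ⁻¹).surjective.range_comp t
    exact h1.trans h2.symm
  haveI : WellFoundedLT (Fin n) := inferInstance
  have hfg : (fun i => t (σ⁻¹ i)) = (fun i => t (τ⁻¹ i)) := (hfs.range_inj hgt).1 hrange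
  have htinj : Injective t := by
    intro a b hab
    have h3 : t (σ⁻¹ (σ a)) = t (σ⁻¹ (σ b)) := by
      simp only [Equiv.Perm.coe_inv, Equiv.symm_apply_apply]; exact hab
    exact σ.injective (hfs.injective h3)
  have : σ⁻¹ = τ⁻¹ := Equiv.ext fun i => htinj (congrFun hfg i)
  exact hστ (inv_injective this)

lemma shufSet_subset_bigT (r s : ℕ) (σ : Equiv.Perm (Fin (r + s)))
    (hσ : isShuffle r s σ) : shufSet (r + s) σ ⊆ bigT r s := by
  rintro t ⟨h1, h2⟩
  refine ⟨h1, fun i j hij hblk => ?_⟩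
  rcases eq_or_lt_of_le hij with rfl | h
  · exact le_rfl
  have hσij := hσ i j h hblk
  have := h2 (σ i) (σ j) hσij.le
  simpa [Equiv.Perm.coe_inv, Equiv.symm_apply_apply] using this

lemma exists_shuffle (r s : ℕ) (t : Fin (r + s) → ℝ) (ht : t ∈ bigT r s)
    (htN : t ∉ bigN (r + s)) :
    ∃ σ, isShuffle r s σ ∧ t ∈ shufSetS (r + s) σ := by
  have htinj : Injective t := by
    intro a b hab
    by_contra hne
    exact htN (mem_iUnion.2 ⟨(a, b), mem_iUnion.2 ⟨hne, hab⟩⟩)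
  set π := Tuple.sort t with hπ
  have hmono : Monotone (t ∘ π) := Tuple.monotone_sort t
  have hsm : StrictMono (t ∘ π) := hmono.strictMono_of_injective (htinj.comp π.injective)
  refine ⟨π⁻¹, ?_, ?_⟩
  · intro i j hij hblk
    have h1 : t i ≤ t j := ht.2 i j hij.le hblk
    have h2 : t i < t j := lt_of_le_of_ne h1 fun h => hij.ne (htinj h)
    have h3 : (t ∘ π) (π⁻¹ i) < (t ∘ π) (π⁻¹ j) := by
      simpa [Function.comp, Equiv.Perm.coe_inv, Equiv.apply_symm_apply] using h2
    exact hsm.lt_iff_lt.1 h3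
  · refine ⟨ht.1, fun i j hij => ?_⟩
    have hinv : (π⁻¹)⁻¹ = π := inv_inv π
    rw [hinv]
    exact hsm hij

lemma integrableOn_shufSet (n : ℕ) (w : Fin n → (E → E →L[ℝ] ℝ)) (γ : ℝ → E)
    (hw : ∀ i, Continuous fun p : E × E => w i p.1 p.2) (hγ : ContDiff ℝ 1 γ)
    (σ : Equiv.Perm (Fin n)) :
    IntegrableOn (F n w γ) (shufSet n σ) volume :=
  (contF n w γ hw hγ).continuousOn.integrableOn_compact (isCompact_shufSet n σ)

lemma integral_bigT (r s : ℕ) (w : Fin (r + s) → (E → E →L[ℝ] ℝ)) (γ : ℝ → E)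
    (hw : ∀ i, Continuous fun p : E × E => w i p.1 p.2) (hγ : ContDiff ℝ 1 γ) :
    ∫ t in bigT r s, F (r + s) w γ t =
      ∑ σ ∈ Finset.univ.filter (fun σ => isShuffle r s σ),
        ∫ t in shufSet (r + s) σ, F (r + s) w γ t := by
  have hae : bigT r s =ᵐ[(volume : Measure (Fin (r + s) → ℝ))]
      ⋃ σ ∈ Finset.univ.filter (fun σ => isShuffle r s σ), shufSetS (r + s) σ := by
    rw [MeasureTheory.ae_eq_set]
    constructor
    · refine measure_mono_null ?_ (null_bigN (r + s))
      rintro t ⟨ht, htU⟩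
      by_contra htN
      obtain ⟨σ, hσ, htσ⟩ := exists_shuffle r s t ht htN
      exact htU (mem_iUnion₂.2 ⟨σ, Finset.mem_filter.2 ⟨Finset.mem_univ _, hσ⟩, htσ⟩)
    · have hsub : (⋃ σ ∈ Finset.univ.filter (fun σ => isShuffle r s σ),
          shufSetS (r + s) σ) ⊆ bigT r s := by
        refine iUnion₂_subset fun σ hσ => ?_
        exact (shufSetS_subset _ σ).trans
          (shufSet_subset_bigT r s σ (Finset.mem_filter.1 hσ).2)
      rw [diff_eq_empty.2 hsub]
      exact measure_empty
  rw [setIntegral_congr_set hae]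
  rw [integral_biUnion_finset _ (fun σ _ => measurableSet_shufSetS _ σ)
      (fun σ _ τ _ hne => shufSetS_disjoint _ hne)
      (fun σ _ => (integrableOn_shufSet (r + s) w γ hw hγ σ).mono_set
        (shufSetS_subset _ σ))]
  exact Finset.sum_congr rfl fun σ _ => (setIntegral_congr_set (shufSet_ae_eq _ σ)).symm

lemma prod_eq (r s : ℕ) (w : Fin (r + s) → (E → E →L[ℝ] ℝ)) (γ : ℝ → E) :
    iteratedIntegral r (fun i => w (Fin.castAdd s i)) γ *
      iteratedIntegral s (fun i => w (Fin.natAdd r i)) γ =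
    ∫ t in bigT r s, F (r + s) w γ t := by
  classical
  set e := (MeasurableEquiv.piCongrLeft (fun _ : Fin (r + s) => ℝ) finSumFinEquiv).symm.trans
      (MeasurableEquiv.sumPiEquivProdPi fun _ : Fin r ⊕ Fin s => ℝ) with hedef
  have h1 : MeasurePreserving
      (MeasurableEquiv.piCongrLeft (fun _ : Fin (r + s) => ℝ) finSumFinEquiv).symm
      volume volume :=
    (MeasureTheory.volume_measurePreserving_piCongrLeft (fun _ => ℝ) finSumFinEquiv).symm _
  have h2 := MeasureTheory.volume_measurePreserving_sumPiEquivProdPi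
    (fun _ : Fin r ⊕ Fin s => ℝ)
  have hmp : MeasurePreserving e volume volume := h2.comp h1
  have happ : ∀ u : Fin (r + s) → ℝ, e u =
      ((fun i => u (Fin.castAdd s i)), (fun i => u (Fin.natAdd r i))) := by
    intro u
    rw [Prod.ext_iff]
    constructor <;> funext i <;>
      simp [hedef, MeasurableEquiv.trans_apply, MeasurableEquiv.sumPiEquivProdPi,
        MeasurableEquiv.piCongrLeft, Equiv.sumPiEquivProdPi, Equiv.piCongrLeft_symm_apply]
  have hpre : ⇑e ⁻¹' ((shufSet r 1) ×ˢ (shufSet s 1)) = bigT r s := by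
    ext u
    simp only [mem_preimage, happ, Set.mem_prod, shufSet, mem_setOf_eq, inv_one,
      Equiv.Perm.coe_one, id_eq, bigT]
    constructor
    · rintro ⟨⟨ha1, ha2⟩, ⟨hb1, hb2⟩⟩
      constructor
      · intro i
        rcases lt_or_ge (i : ℕ) r with h | h
        · have hi : Fin.castAdd s ⟨(i : ℕ), h⟩ = i := by ext; simp
          rw [← hi]; exact ha1 ⟨(i : ℕ), h⟩
        · have hlt : (i : ℕ) - r < s := by omega
          have hi : Fin.natAdd r ⟨(i : ℕ) - r, hlt⟩ = i := by ext; simp; omega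
          rw [← hi]; exact hb1 _
      · intro i j hij hblk
        have hijv : (i : ℕ) ≤ (j : ℕ) := hij
        rcases hblk with hjr | hri
        · have hir : (i : ℕ) < r := lt_of_le_of_lt hijv hjr
          have hi : Fin.castAdd s ⟨(i : ℕ), hir⟩ = i := by ext; simp
          have hj : Fin.castAdd s ⟨(j : ℕ), hjr⟩ = j := by ext; simp
          rw [← hi, ← hj]
          exact ha2 _ _ hijv
        · have hrj : r ≤ (j : ℕ) := le_trans hri hijv
          have hlti : (i : ℕ) - r < s := by omega
          have hltj : (j : ℕ) - r < s := by omega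
          have hi : Fin.natAdd r ⟨(i : ℕ) - r, hlti⟩ = i := by ext; simp; omega
          have hj : Fin.natAdd r ⟨(j : ℕ) - r, hltj⟩ = j := by ext; simp; omega
          rw [← hi, ← hj]
          refine hb2 _ _ ?_
          show (i : ℕ) - r ≤ (j : ℕ) - r
          omega
    · rintro ⟨h1, h2⟩
      refine ⟨⟨fun i => h1 _, fun i j hij => ?_⟩, fun i => h1 _, fun i j hij => ?_⟩
      · refine h2 (Fin.castAdd s i) (Fin.castAdd s j) ?_ (Or.inl ?_)
        · show ((Fin.castAdd s i) : ℕ) ≤ ((Fin.castAdd s j) : ℕ)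
          simpa using hij
        · simpa using j.isLt
      · refine h2 (Fin.natAdd r i) (Fin.natAdd r j) ?_ (Or.inr ?_)
        · show ((Fin.natAdd r i) : ℕ) ≤ ((Fin.natAdd r j) : ℕ)
          simpa using hij
        · simp
  have hkey := hmp.setIntegral_preimage_emb e.measurableEmbedding
    (fun p : (Fin r → ℝ) × (Fin s → ℝ) =>
      (∏ i, w (Fin.castAdd s i) (γ (p.1 i)) (deriv γ (p.1 i))) *
        ∏ i, w (Fin.natAdd r i) (γ (p.2 i)) (deriv γ (p.2 i)))
    ((shufSet r 1) ×ˢ (shufSet s 1))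
  have hfun : ∀ u : Fin (r + s) → ℝ,
      (∏ i, w (Fin.castAdd s i) (γ ((e u).1 i)) (deriv γ ((e u).1 i))) *
        (∏ i, w (Fin.natAdd r i) (γ ((e u).2 i)) (deriv γ ((e u).2 i))) =
      ∏ i, w i (γ (u i)) (deriv γ (u i)) := by
    intro u
    rw [happ]
    exact (Fin.prod_univ_add (f := fun i => w i (γ (u i)) (deriv γ (u i)))).symm
  rw [iteratedIntegral_eq, iteratedIntegral_eq, ← setIntegral_prod_mul,
    ← MeasureTheory.Measure.volume_eq_prod]
  unfold F
  rw [← hkey, hpre]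
  simp only [hfun]

end IterShuffle

open IterShuffle in
theorem iteratedIntegral_shuffle_product
    {E : Type*} [NormedAddCommGroup E] [NormedSpace ℝ E]
    (r s : ℕ) (w : Fin (r + s) → (E → E →L[ℝ] ℝ)) (γ : ℝ → E)
    (hw : ∀ i, Continuous fun p : E × E => w i p.1 p.2)
    (hγ : ContDiff ℝ 1 γ) :
    iteratedIntegral r (fun i => w (Fin.castAdd s i)) γ *
      iteratedIntegral s (fun i => w (Fin.natAdd r i)) γ =
    ∑ σ : Equiv.Perm (Fin (r + s)),
      if (∀ i j : Fin (r + s), i < j → ((j : ℕ) < r ∨ r ≤ (i : ℕ)) → σ i < σ j)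
      then iteratedIntegral (r + s) (fun i => w (σ⁻¹ i)) γ
      else 0 := by
  have hRHS : ∀ σ : Equiv.Perm (Fin (r + s)),
      (if (∀ i j : Fin (r + s), i < j → ((j : ℕ) < r ∨ r ≤ (i : ℕ)) → σ i < σ j)
        then iteratedIntegral (r + s) (fun i => w (σ⁻¹ i)) γ else 0) =
      (if isShuffle r s σ then ∫ t in shufSet (r + s) σ, F (r + s) w γ t else 0) := by
    intro σ
    by_cases h : isShuffle r s σ
    · rw [if_pos h, if_pos (show (∀ i j : Fin (r + s), i < j → ((j : ℕ) < r ∨ r ≤ (i : ℕ)) →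
        σ i < σ j) from h), iteratedIntegral_perm]
    · rw [if_neg h, if_neg (show ¬(∀ i j : Fin (r + s), i < j → ((j : ℕ) < r ∨ r ≤ (i : ℕ)) →
        σ i < σ j) from h)]
  rw [Finset.sum_congr rfl fun σ _ => hRHS σ, ← Finset.sum_filter,
    prod_eq r s w γ, integral_bigT r s w γ hw hγ]
end

section
/- The composition-of-paths formula for iterated integrals: if γ and μ are composable piecewise smooth paths (γ ending where μ starts) and w₁,…,w_r are 1-forms, then ∫_{γμ} w₁⋯w_r = Σ_{i=0}^{r} (∫_γ w₁⋯w_i)(∫_μ w_{i+1}⋯w_r), with the convention that the empty iterated integral equals 1. -/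
/-- Concatenation of two paths `[0,1] → E`. -/
noncomputable def pathTrans {E : Type*} (γ μ : ℝ → E) : ℝ → E :=
  fun t => if t ≤ 1 / 2 then γ (2 * t) else μ (2 * t - 1)

open MeasureTheory Set Filter

namespace IIaux

variable {E : Type*} [NormedAddCommGroup E] [NormedSpace ℝ E]

/-- the ordered simplex in `[0,1]^r` -/
def S (r : ℕ) : Set (Fin r → ℝ) :=
  {t | (∀ i, 0 ≤ t i ∧ t i ≤ 1) ∧ ∀ i j : Fin r, i ≤ j → t i ≤ t j}

lemma measurableSet_S (r : ℕ) : MeasurableSet (S r) := by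
  unfold S
  simp only [setOf_and, setOf_forall]
  refine MeasurableSet.inter (MeasurableSet.iInter fun i =>
      show MeasurableSet {t : Fin r → ℝ | 0 ≤ t i ∧ t i ≤ 1} from ?_)
    (MeasurableSet.iInter fun i => MeasurableSet.iInter fun j => MeasurableSet.iInter fun _ =>
      show MeasurableSet {t : Fin r → ℝ | t i ≤ t j} from
        measurableSet_le (measurable_pi_apply i) (measurable_pi_apply j))
  exact (measurableSet_le measurable_const (measurable_pi_apply i)).inter
        (measurableSet_le (measurable_pi_apply i) measurable_const)

noncomputable def pa (w : E → E →L[ℝ] ℝ) (γ : ℝ → E) (t : ℝ) : ℝ := w (γ t) (deriv γ t)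

lemma continuous_pa {w : E → E →L[ℝ] ℝ} {γ : ℝ → E}
    (hw : Continuous fun p : E × E => w p.1 p.2) (hγ : ContDiff ℝ 1 γ) :
    Continuous (pa w γ) :=
  hw.comp (hγ.continuous.prodMk (hγ.continuous_deriv le_rfl))

lemma pa_pathTrans_left {w : E → E →L[ℝ] ℝ} {γ μ : ℝ → E} (hγ : ContDiff ℝ 1 γ)
    {t : ℝ} (ht : t < 1/2) :
    pa w (pathTrans γ μ) t = 2 * pa w γ (2 * t) := by
  have hev : pathTrans γ μ =ᶠ[nhds t] fun x => γ (2*x) := by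
    filter_upwards [Iio_mem_nhds ht] with x (hx : x < 1/2)
    exact if_pos hx.le
  have h2 : HasDerivAt (fun x : ℝ => 2*x) 2 t := by simpa using (hasDerivAt_id t).const_mul 2
  have hd : HasDerivAt (fun x : ℝ => γ (2*x)) ((2:ℝ) • deriv γ (2*t)) t := by
    simpa [Function.comp_def] using ((hγ.differentiable one_ne_zero (2*t)).hasDerivAt).scomp t h2
  have hder : deriv (pathTrans γ μ) t = (2:ℝ) • deriv γ (2*t) := by
    rw [hev.deriv_eq, hd.deriv]
  unfold pa
  rw [hder, show pathTrans γ μ t = γ (2*t) from if_pos ht.le,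
    ContinuousLinearMap.map_smul, smul_eq_mul]

lemma pa_pathTrans_right {w : E → E →L[ℝ] ℝ} {γ μ : ℝ → E} (hμ : ContDiff ℝ 1 μ)
    {t : ℝ} (ht : 1/2 < t) :
    pa w (pathTrans γ μ) t = 2 * pa w μ (2 * t - 1) := by
  have hev : pathTrans γ μ =ᶠ[nhds t] fun x => μ (2*x - 1) := by
    filter_upwards [Ioi_mem_nhds ht] with x (hx : 1/2 < x)
    exact if_neg (not_le.mpr hx)
  have h2 : HasDerivAt (fun x : ℝ => 2*x - 1) 2 t := by
    simpa using ((hasDerivAt_id t).const_mul 2).sub_const 1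
  have hd : HasDerivAt (fun x : ℝ => μ (2*x - 1)) ((2:ℝ) • deriv μ (2*t - 1)) t := by
    simpa [Function.comp_def] using ((hμ.differentiable one_ne_zero (2*t-1)).hasDerivAt).scomp t h2
  have hder : deriv (pathTrans γ μ) t = (2:ℝ) • deriv μ (2*t - 1) := by
    rw [hev.deriv_eq, hd.deriv]
  unfold pa
  rw [hder, show pathTrans γ μ t = μ (2*t - 1) from if_neg (not_le.mpr ht),
    ContinuousLinearMap.map_smul, smul_eq_mul]

end IIaux

namespace IIaux

/-- the cell of the partition of the simplex -/
def P (r k : ℕ) : Set (Fin r → ℝ) :=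
  S r ∩ {t | (∀ i : Fin r, (i : ℕ) < k → t i ≤ 1/2) ∧ ∀ i : Fin r, k ≤ (i : ℕ) → 1/2 < t i}

lemma measurableSet_P (r k : ℕ) : MeasurableSet (P r k) := by
  refine (measurableSet_S r).inter ?_
  rw [setOf_and]
  refine MeasurableSet.inter ?_ ?_ <;>
  · simp only [setOf_forall]
    refine MeasurableSet.iInter fun i => MeasurableSet.iInter fun _ => ?_
    first
    | exact show MeasurableSet {t : Fin r → ℝ | t i ≤ 1/2} from
        measurableSet_le (measurable_pi_apply i) measurable_const
    | exact show MeasurableSet {t : Fin r → ℝ | 1/2 < t i} from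
        measurableSet_lt measurable_const (measurable_pi_apply i)

lemma S_eq_iUnion (r : ℕ) : S r = ⋃ k : Fin (r+1), P r k := by
  ext t
  simp only [mem_iUnion]
  constructor
  · rintro ht
    obtain ⟨hb, hm⟩ := id ht
    set k : ℕ := (Finset.univ.filter (fun i : Fin r => t i ≤ 1/2)).card with hk
    have hkr : k ≤ r := by
      simpa using Finset.card_le_card (Finset.filter_subset _ (Finset.univ : Finset (Fin r)))
    refine ⟨⟨k, by omega⟩, ht, fun i (hi : (i:ℕ) < k) => ?_, fun i (hi : k ≤ (i:ℕ)) => ?_⟩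
    · by_contra hcon
      push_neg at hcon
      have hsub : (Finset.univ.filter (fun j : Fin r => t j ≤ 1/2)) ⊆ Finset.Iio i := by
        intro j hj
        simp only [Finset.mem_filter] at hj
        rw [Finset.mem_Iio]
        by_contra hij
        exact absurd (le_trans (hm i j (not_lt.mp hij)) hj.2) (not_le.mpr hcon)
      have := Finset.card_le_card hsub
      rw [Fin.card_Iio] at this
      omega
    · by_contra hcon
      push_neg at hcon
      have hsub : Finset.Iic i ⊆ (Finset.univ.filter (fun j : Fin r => t j ≤ 1/2)) := by
        intro j hj
        rw [Finset.mem_Iic] at hj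
        simp only [Finset.mem_filter, Finset.mem_univ, true_and]
        exact le_trans (hm j i hj) hcon
      have := Finset.card_le_card hsub
      rw [Fin.card_Iic] at this
      omega
  · rintro ⟨k, hk, -⟩
    exact hk

lemma pairwise_disjoint_P (r : ℕ) :
    Pairwise (Function.onFun Disjoint (fun k : Fin (r+1) => P r k)) := by
  intro k l hkl
  wlog h : (k : ℕ) < (l : ℕ) generalizing k l
  · have hne : (k:ℕ) ≠ (l:ℕ) := fun hh => hkl (Fin.ext hh)
    exact (this hkl.symm (by omega)).symm
  · refine Set.disjoint_left.mpr fun t htk htl => ?_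
    have hkr : (k : ℕ) < r := by have := l.isLt; omega
    have h1 := htk.2.2 ⟨k, hkr⟩ (le_refl _)
    have h2 := htl.2.1 ⟨k, hkr⟩ h
    exact absurd h1 (not_lt.mpr h2)

lemma volume_halfSet (r : ℕ) : volume {t : Fin r → ℝ | ∃ i, t i = (1/2:ℝ)} = 0 := by
  rw [setOf_exists]
  refine measure_iUnion_null fun i => ?_
  have := MeasureTheory.Measure.pi_hyperplane (fun _ : Fin r => (volume : Measure ℝ)) i (1/2 : ℝ)
  simpa [MeasureTheory.volume_pi] using this

end IIaux

namespace IIaux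

variable {E : Type*} [NormedAddCommGroup E] [NormedSpace ℝ E] {r : ℕ}

/-- unit box -/
def uBox (r : ℕ) : Set (Fin r → ℝ) := Set.pi univ (fun _ : Fin r => Icc (0:ℝ) 1)

lemma measurableSet_uBox (r : ℕ) : MeasurableSet (uBox r) :=
  MeasurableSet.univ_pi fun _ => measurableSet_Icc

lemma volume_uBox (r : ℕ) : volume (uBox r) = 1 := by
  rw [uBox, MeasureTheory.volume_pi_pi]
  simp [Real.volume_Icc]

lemma S_subset_uBox (r : ℕ) : S r ⊆ uBox r := by
  intro t ht i _
  exact ⟨(ht.1 i).1, (ht.1 i).2⟩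

noncomputable def Fq (w : Fin r → (E → E →L[ℝ] ℝ)) (γ μ : ℝ → E) (t : Fin r → ℝ) : ℝ :=
  ∏ i, (if t i ≤ 1/2 then 2 * pa (w i) γ (2 * t i) else 2 * pa (w i) μ (2 * t i - 1))

variable {w : Fin r → (E → E →L[ℝ] ℝ)} {γ μ : ℝ → E}

lemma Fp_ae_eq_Fq (hγ : ContDiff ℝ 1 γ) (hμ : ContDiff ℝ 1 μ) :
    (fun t : Fin r → ℝ => ∏ i, pa (w i) (pathTrans γ μ) (t i)) =ᵐ[volume] Fq w γ μ := by
  have h : ∀ᵐ t : Fin r → ℝ, ¬ ∃ i, t i = (1/2:ℝ) :=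
    compl_mem_ae_iff.2 (by exact volume_halfSet r)
  filter_upwards [h] with t ht
  push_neg at ht
  refine Finset.prod_congr rfl fun i _ => ?_
  rcases lt_or_gt_of_ne (ht i) with hlt | hgt
  · rw [if_pos hlt.le, pa_pathTrans_left hγ hlt]
  · rw [if_neg (not_le.mpr hgt), pa_pathTrans_right hμ hgt]

lemma measurable_Fq (hw : ∀ i, Continuous fun p : E × E => w i p.1 p.2)
    (hγ : ContDiff ℝ 1 γ) (hμ : ContDiff ℝ 1 μ) : Measurable (Fq w γ μ) := by
  refine Finset.measurable_prod _ fun i _ => Measurable.ite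
    (measurableSet_le (measurable_pi_apply i) measurable_const) ?_ ?_
  · exact (measurable_const.mul ((continuous_pa (hw i) hγ).measurable.comp
      (measurable_const.mul (measurable_pi_apply i))))
  · exact (measurable_const.mul ((continuous_pa (hw i) hμ).measurable.comp
      ((measurable_const.mul (measurable_pi_apply i)).sub measurable_const)))

lemma integrableOn_Fq (hw : ∀ i, Continuous fun p : E × E => w i p.1 p.2)
    (hγ : ContDiff ℝ 1 γ) (hμ : ContDiff ℝ 1 μ)
    {s : Set (Fin r → ℝ)} (hs : MeasurableSet s) (hsub : s ⊆ uBox r) :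
    IntegrableOn (Fq w γ μ) s := by
  have hbound : ∀ i : Fin r, ∃ C : ℝ, ∀ x : ℝ, x ∈ Icc (0:ℝ) 1 →
      |(if x ≤ 1/2 then 2 * pa (w i) γ (2 * x) else 2 * pa (w i) μ (2 * x - 1))| ≤ C := by
    intro i
    have hc1 : Continuous (fun x : ℝ => 2 * pa (w i) γ (2 * x)) :=
      continuous_const.mul ((continuous_pa (hw i) hγ).comp
        (continuous_const.mul continuous_id))
    have hc2 : Continuous (fun x : ℝ => 2 * pa (w i) μ (2 * x - 1)) :=
      continuous_const.mul ((continuous_pa (hw i) hμ).comp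
        ((continuous_const.mul continuous_id).sub continuous_const))
    obtain ⟨C1, h1⟩ := (isCompact_Icc (a := (0:ℝ)) (b := 1)).exists_bound_of_continuousOn
      hc1.continuousOn
    obtain ⟨C2, h2⟩ := (isCompact_Icc (a := (0:ℝ)) (b := 1)).exists_bound_of_continuousOn
      hc2.continuousOn
    refine ⟨max C1 C2, fun x hx => ?_⟩
    by_cases hhalf : x ≤ 1/2
    · rw [if_pos hhalf]
      exact le_trans (by rw [← Real.norm_eq_abs]; exact h1 x hx) (le_max_left _ _)
    · rw [if_neg hhalf]
      exact le_trans (by rw [← Real.norm_eq_abs]; exact h2 x hx) (le_max_right _ _)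
  choose C hC using hbound
  have hmeas := measurable_Fq (E := E) hw hγ hμ
  refine Integrable.mono' (g := fun _ => ∏ i, C i) ?_ hmeas.aestronglyMeasurable ?_
  · exact (integrableOn_const_iff).mpr (Or.inr
      (lt_of_le_of_lt (measure_mono hsub) (by rw [volume_uBox]; exact ENNReal.one_lt_top)))
  · refine (ae_restrict_iff' hs).mpr (ae_of_all _ fun t ht => ?_)
    rw [Real.norm_eq_abs, Fq, Finset.abs_prod]
    refine Finset.prod_le_prod (fun i _ => abs_nonneg _) fun i _ => ?_
    exact hC i (t i) (hsub ht i (mem_univ i))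

end IIaux

namespace IIaux

variable {E : Type*} [NormedAddCommGroup E] [NormedSpace ℝ E] {r : ℕ}

lemma volume_levelSet (r : ℕ) (c : ℝ) : volume {t : Fin r → ℝ | ∃ i, t i = c} = 0 := by
  rw [setOf_exists]
  refine measure_iUnion_null fun i => ?_
  have := MeasureTheory.Measure.pi_hyperplane (fun _ : Fin r => (volume : Measure ℝ)) i c
  simpa [MeasureTheory.volume_pi] using this

/-- domain cell: pair of simplices interleaved -/
def Tk (r k : ℕ) : Set (Fin r → ℝ) :=
  {s | (∀ i, 0 ≤ s i ∧ s i ≤ 1) ∧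
    ∀ i j : Fin r, i ≤ j → ((j : ℕ) < k ∨ k ≤ (i : ℕ)) → s i ≤ s j}

/-- closed version of the cell `P r k` -/
def Sc (r k : ℕ) : Set (Fin r → ℝ) :=
  {t | (∀ i : Fin r, ((i : ℕ) < k → 0 ≤ t i ∧ t i ≤ 1/2) ∧
      (k ≤ (i : ℕ) → 1/2 ≤ t i ∧ t i ≤ 1)) ∧
    ∀ i j : Fin r, i ≤ j → t i ≤ t j}

noncomputable def φk (r k : ℕ) : (Fin r → ℝ) → (Fin r → ℝ) :=
  fun s => (1/2 : ℝ) • s + fun i : Fin r => if k ≤ (i : ℕ) then (1/2 : ℝ) else 0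

lemma φk_apply (k : ℕ) (s : Fin r → ℝ) (i : Fin r) :
    φk r k s i = (1/2) * s i + if k ≤ (i : ℕ) then 1/2 else 0 := by
  simp [φk, mul_comm]

lemma measurableSet_Tk (r k : ℕ) : MeasurableSet (Tk r k) := by
  unfold Tk
  simp only [setOf_and, setOf_forall]
  refine MeasurableSet.inter (MeasurableSet.iInter fun i =>
      show MeasurableSet {t : Fin r → ℝ | 0 ≤ t i ∧ t i ≤ 1} from
        (measurableSet_le measurable_const (measurable_pi_apply i)).inter
          (measurableSet_le (measurable_pi_apply i) measurable_const))
    (MeasurableSet.iInter fun i => MeasurableSet.iInter fun j => MeasurableSet.iInter fun _ =>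
      MeasurableSet.iInter fun _ =>
      show MeasurableSet {t : Fin r → ℝ | t i ≤ t j} from
        measurableSet_le (measurable_pi_apply i) (measurable_pi_apply j))

lemma Tk_subset_uBox (r k : ℕ) : Tk r k ⊆ uBox r := fun t ht i _ => ⟨(ht.1 i).1, (ht.1 i).2⟩

lemma P_ae_Sc {k : ℕ} (hk : k ≤ r) : P r k =ᵐ[volume] Sc r k := by
  rw [MeasureTheory.ae_eq_set]
  constructor
  · rw [show P r k \ Sc r k = ∅ from ?_]
    · exact measure_empty
    · rw [diff_eq_empty]
      rintro t ⟨⟨hb, hm⟩, hlow, hhigh⟩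
      refine ⟨fun i => ⟨fun hi => ⟨(hb i).1, hlow i hi⟩,
        fun hi => ⟨(hhigh i hi).le, (hb i).2⟩⟩, hm⟩
  · refine measure_mono_null ?_ (volume_halfSet r)
    rintro t ⟨⟨hblock, hm⟩, hnP⟩
    by_contra hcon
    simp only [mem_setOf_eq, not_exists] at hcon
    refine hnP ⟨⟨fun i => ?_, hm⟩, fun i hi => ((hblock i).1 hi).2, fun i hi => ?_⟩
    · rcases lt_or_ge (i : ℕ) k with h | h
      · have := (hblock i).1 h
        exact ⟨this.1, le_trans this.2 (by norm_num)⟩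
      · have := (hblock i).2 h
        exact ⟨le_trans (by norm_num) this.1, this.2⟩
    · exact lt_of_le_of_ne ((hblock i).2 hi).1 (fun h => hcon i h.symm)

lemma φk_image {k : ℕ} : φk r k '' Tk r k = Sc r k := by
  ext t
  constructor
  · rintro ⟨s, ⟨hb, hm⟩, rfl⟩
    refine ⟨fun i => ⟨fun hi => ?_, fun hi => ?_⟩, fun i j hij => ?_⟩
    · rw [φk_apply, if_neg (by omega)]
      constructor
      · have := (hb i).1; linarith
      · have := (hb i).2; linarith
    · rw [φk_apply, if_pos hi]
      constructor
      · have := (hb i).1; linarith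
      · have := (hb i).2; linarith
    · rw [φk_apply, φk_apply]
      rcases lt_or_ge (j : ℕ) k with hj | hj
      · have hi : (i : ℕ) < k := lt_of_le_of_lt (by exact_mod_cast hij) hj
        rw [if_neg (by omega), if_neg (by omega)]
        have := hm i j hij (Or.inl hj); linarith
      · rcases lt_or_ge (i : ℕ) k with hi | hi
        · rw [if_neg (by omega), if_pos hj]
          have h1 := (hb i).2
          have h2 := (hb j).1
          linarith
        · rw [if_pos hi, if_pos hj]
          have := hm i j hij (Or.inr hi); linarith
  · intro ht
    obtain ⟨hblock, hm⟩ := ht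
    refine ⟨fun i => 2 * t i - if k ≤ (i : ℕ) then 1 else 0, ⟨fun i => ?_, fun i j hij hblk => ?_⟩, ?_⟩
    · dsimp only
      rcases lt_or_ge (i : ℕ) k with h | h
      · rw [if_neg (by omega)]
        have := (hblock i).1 h
        constructor <;> [linarith; linarith]
      · rw [if_pos h]
        have := (hblock i).2 h
        constructor <;> [linarith; linarith]
    · dsimp only
      have := hm i j hij
      rcases hblk with h | h
      · rw [if_neg (show ¬ k ≤ (i:ℕ) by have h2 : (i:ℕ) ≤ (j:ℕ) := Fin.le_iff_val_le_val.mp hij; omega),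
          if_neg (by omega)]
        linarith
      · rw [if_pos h, if_pos (le_trans h (by exact_mod_cast hij))]
        linarith
    · funext i
      rw [φk_apply]
      by_cases h : k ≤ (i : ℕ)
      · rw [if_pos h, if_pos h]; ring
      · rw [if_neg h, if_neg h]; ring

end IIaux

namespace IIaux

variable {E : Type*} [NormedAddCommGroup E] [NormedSpace ℝ E] {r : ℕ}
variable {w : Fin r → (E → E →L[ℝ] ℝ)} {γ μ : ℝ → E}

noncomputable def Gk (w : Fin r → (E → E →L[ℝ] ℝ)) (γ μ : ℝ → E) (k : ℕ)
    (s : Fin r → ℝ) : ℝ :=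
  ∏ i : Fin r, (if (i : ℕ) < k then pa (w i) γ (s i) else pa (w i) μ (s i))

lemma det_smul_id (r : ℕ) :
    ((1/2 : ℝ) • ContinuousLinearMap.id ℝ (Fin r → ℝ)).det = (1/2 : ℝ)^r := by
  rw [ContinuousLinearMap.det, ContinuousLinearMap.coe_smul, ContinuousLinearMap.coe_id,
    LinearMap.det_smul, LinearMap.det_id, mul_one]
  congr 1
  simp [Module.finrank_fintype_fun_eq_card]

lemma cell_step1 (hγ : ContDiff ℝ 1 γ) (hμ : ContDiff ℝ 1 μ) {k : ℕ} (hk : k ≤ r) :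
    ∫ t in P r k, Fq w γ μ t = ∫ s in Tk r k, Gk w γ μ k s := by
  rw [setIntegral_congr_set (P_ae_Sc hk), ← φk_image (k := k)]
  have hder : ∀ x ∈ Tk r k, HasFDerivWithinAt (φk r k)
      ((1/2 : ℝ) • ContinuousLinearMap.id ℝ (Fin r → ℝ)) (Tk r k) x := by
    intro x _
    exact (((hasFDerivAt_id x).const_smul (1/2 : ℝ)).add_const _).hasFDerivWithinAt
  have hinj : Set.InjOn (φk r k) (Tk r k) := by
    intro a _ b _ hab
    have h1 : (1/2 : ℝ) • a = (1/2 : ℝ) • b := by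
      have := congrArg (fun v => v - fun i : Fin r => if k ≤ (i : ℕ) then (1/2:ℝ) else 0) hab
      simpa [φk] using this
    have h2 := congrArg (fun v => (2:ℝ) • v) h1
    simpa [smul_smul] using h2
  rw [MeasureTheory.integral_image_eq_integral_abs_det_fderiv_smul volume
    (measurableSet_Tk r k) hder hinj]
  have hae : ∀ᵐ s : Fin r → ℝ, ∀ i : Fin r, s i ≠ 0 := by
    have h : ∀ᵐ s : Fin r → ℝ, ¬ ∃ i, s i = (0:ℝ) :=
      compl_mem_ae_iff.2 (by exact volume_levelSet r 0)
    filter_upwards [h] with s hs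
    push_neg at hs
    exact hs
  refine setIntegral_congr_ae (measurableSet_Tk r k) ?_
  filter_upwards [hae] with s hs hsT
  rw [det_smul_id, abs_of_nonneg (by positivity)]
  have hfq : Fq w γ μ (φk r k s) = 2^r * Gk w γ μ k s := by
    unfold Fq Gk
    rw [show (2:ℝ)^r = ∏ _i : Fin r, (2:ℝ) by simp, ← Finset.prod_mul_distrib]
    refine Finset.prod_congr rfl fun i _ => ?_
    rcases lt_or_ge (i : ℕ) k with hik | hik
    · rw [if_pos (show φk r k s i ≤ 1/2 by
        rw [φk_apply, if_neg (by omega)]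
        have := (hsT.1 i).2
        linarith), if_pos hik]
      congr 1
      rw [φk_apply, if_neg (by omega)]
      ring
    · rw [if_neg (show ¬ (φk r k s i ≤ 1/2) by
        push_neg
        rw [φk_apply, if_pos hik]
        have h0 := (hsT.1 i).1
        have hne := hs i
        have : 0 < s i := lt_of_le_of_ne h0 (Ne.symm hne)
        linarith), if_neg (by omega)]
      congr 1
      rw [φk_apply, if_pos hik]
      ring
  rw [hfq, smul_eq_mul, ← mul_assoc, ← mul_pow]
  norm_num

end IIaux

namespace IIaux

variable {E : Type*} [NormedAddCommGroup E] [NormedSpace ℝ E] {r : ℕ}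
variable {w : Fin r → (E → E →L[ℝ] ℝ)} {γ μ : ℝ → E}

lemma cell_step2 {k : ℕ} (hk : k ≤ r) :
    ∫ s in Tk r k, Gk w γ μ k s =
      (∫ x in S k, ∏ i : Fin k, pa (w (Fin.castLE hk i)) γ (x i)) *
      (∫ y in S (r - k), ∏ j : Fin (r - k),
        pa (w ⟨k + (j : ℕ), by have := j.isLt; omega⟩) μ (y j)) := by
  have hkr : k + (r - k) = r := by omega
  set e1 : Fin k ⊕ Fin (r - k) ≃ Fin r := finSumFinEquiv.trans (finCongr hkr) with he1
  set meq : ((Fin k → ℝ) × (Fin (r - k) → ℝ)) ≃ᵐ (Fin r → ℝ) :=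
    (MeasurableEquiv.sumPiEquivProdPi (fun _ : Fin k ⊕ Fin (r - k) => ℝ)).symm.trans
      (MeasurableEquiv.piCongrLeft (fun _ => ℝ) e1) with hmeq
  have hmp : MeasurePreserving meq volume volume := by
    have h := (MeasureTheory.volume_measurePreserving_piCongrLeft (fun _ : Fin r => ℝ) e1).comp
      (MeasureTheory.volume_measurePreserving_sumPiEquivProdPi_symm
        (fun _ : Fin k ⊕ Fin (r - k) => ℝ))
    exact h
  have hinl : ∀ (x : Fin k → ℝ) (y : Fin (r - k) → ℝ) (a : Fin k),
      meq (x, y) (e1 (Sum.inl a)) = x a := fun x y a =>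
    Equiv.piCongrLeft_sumInl (fun _ => ℝ) e1 x y a
  have hinr : ∀ (x : Fin k → ℝ) (y : Fin (r - k) → ℝ) (b : Fin (r - k)),
      meq (x, y) (e1 (Sum.inr b)) = y b := fun x y b =>
    Equiv.piCongrLeft_sumInr (fun _ => ℝ) e1 x y b
  have he1l : ∀ a : Fin k, ((e1 (Sum.inl a)) : ℕ) = (a : ℕ) := by
    intro a; simp [he1]
  have he1r : ∀ b : Fin (r - k), ((e1 (Sum.inr b)) : ℕ) = k + (b : ℕ) := by
    intro b; simp [he1]
  have hpre : meq ⁻¹' (Tk r k) = (S k) ×ˢ (S (r - k)) := by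
    ext ⟨x, y⟩
    simp only [mem_preimage, mem_prod]
    constructor
    · rintro ⟨hb, hm⟩
      refine ⟨⟨fun a => ?_, fun a b hab => ?_⟩, ⟨fun a => ?_, fun a b hab => ?_⟩⟩
      · rw [← hinl x y a]; exact hb _
      · rw [← hinl x y a, ← hinl x y b]
        refine hm _ _ (Fin.le_iff_val_le_val.mpr ?_) (Or.inl ?_)
        · rw [he1l, he1l]; exact_mod_cast hab
        · rw [he1l]; exact b.isLt
      · rw [← hinr x y a]; exact hb _
      · rw [← hinr x y a, ← hinr x y b]
        refine hm _ _ (Fin.le_iff_val_le_val.mpr ?_) (Or.inr ?_)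
        · rw [he1r, he1r]; have : (a:ℕ) ≤ (b:ℕ) := by exact_mod_cast hab
          omega
        · rw [he1r]; omega
    · rintro ⟨⟨hxb, hxm⟩, ⟨hyb, hym⟩⟩
      constructor
      · intro i
        obtain ⟨u, rfl⟩ : ∃ u, e1 u = i := ⟨e1.symm i, e1.apply_symm_apply i⟩
        cases u with
        | inl a => rw [hinl]; exact hxb a
        | inr b => rw [hinr]; exact hyb b
      · intro i j hij hblk
        obtain ⟨u, rfl⟩ : ∃ u, e1 u = i := ⟨e1.symm i, e1.apply_symm_apply i⟩
        obtain ⟨v, rfl⟩ : ∃ v, e1 v = j := ⟨e1.symm j, e1.apply_symm_apply j⟩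
        have hij' : ((e1 u : Fin r) : ℕ) ≤ ((e1 v : Fin r) : ℕ) := Fin.le_iff_val_le_val.mp hij
        cases u with
        | inl a =>
          cases v with
          | inl b =>
            rw [hinl, hinl]
            refine hxm a b (Fin.le_iff_val_le_val.mpr ?_)
            rw [he1l a, he1l b] at hij'
            exact_mod_cast hij'
          | inr b =>
            exfalso
            rw [he1l a] at hblk hij'
            rw [he1r b] at hblk hij'
            have := a.isLt
            rcases hblk with h | h <;> omega
        | inr a =>
          cases v with
          | inl b =>
            rw [hinr, hinl]
            rw [he1r a] at hij'
            rw [he1l b] at hij'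
            have := b.isLt
            omega
          | inr b =>
            rw [hinr, hinr]
            refine hym a b (Fin.le_iff_val_le_val.mpr ?_)
            rw [he1r a, he1r b] at hij'
            omega
  have hGsplit : ∀ (x : Fin k → ℝ) (y : Fin (r - k) → ℝ),
      Gk w γ μ k (meq (x, y)) =
        (∏ i : Fin k, pa (w (Fin.castLE hk i)) γ (x i)) *
        (∏ j : Fin (r - k), pa (w ⟨k + (j : ℕ), by have := j.isLt; omega⟩) μ (y j)) := by
    intro x y
    unfold Gk
    rw [← Equiv.prod_comp e1 (fun i : Fin r =>
      if (i : ℕ) < k then pa (w i) γ (meq (x, y) i) else pa (w i) μ (meq (x, y) i)),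
      Fintype.prod_sum_type]
    refine congrArg₂ (· * ·) (Finset.prod_congr rfl fun a _ => ?_)
      (Finset.prod_congr rfl fun b _ => ?_)
    · rw [if_pos (by rw [he1l]; exact a.isLt)]
      have harg : e1 (Sum.inl a) = Fin.castLE hk a := Fin.ext (he1l a)
      rw [hinl, harg]
    · rw [if_neg (by rw [he1r]; omega)]
      have harg : e1 (Sum.inr b) = (⟨k + (b : ℕ), by have := b.isLt; omega⟩ : Fin r) :=
        Fin.ext (he1r b)
      rw [hinr, harg]
  rw [← hmp.setIntegral_preimage_emb meq.measurableEmbedding (fun s => Gk w γ μ k s) (Tk r k),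
    hpre]
  have hfun : (fun p : (Fin k → ℝ) × (Fin (r - k) → ℝ) => Gk w γ μ k (meq p)) =
      fun p => (∏ i : Fin k, pa (w (Fin.castLE hk i)) γ (p.1 i)) *
        (∏ j : Fin (r - k), pa (w ⟨k + (j : ℕ), by have := j.isLt; omega⟩) μ (p.2 j)) :=
    funext fun p => hGsplit p.1 p.2
  rw [show (∫ p in (S k) ×ˢ (S (r - k)), Gk w γ μ k (meq p)) =
      ∫ p in (S k) ×ˢ (S (r - k)),
        (∏ i : Fin k, pa (w (Fin.castLE hk i)) γ (p.1 i)) *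
        (∏ j : Fin (r - k), pa (w ⟨k + (j : ℕ), by have := j.isLt; omega⟩) μ (p.2 j)) from by
    rw [hfun]]
  rw [MeasureTheory.Measure.volume_eq_prod]
  exact MeasureTheory.setIntegral_prod_mul
    (fun x : Fin k → ℝ => ∏ i : Fin k, pa (w (Fin.castLE hk i)) γ (x i))
    (fun y : Fin (r - k) → ℝ => ∏ j : Fin (r - k),
      pa (w ⟨k + (j : ℕ), by have := j.isLt; omega⟩) μ (y j)) _ _

end IIaux


/-- the composition-of-paths formula for iterated integrals:
`∫_{γμ} w₁⋯w_r = Σ_{i=0}^{r} (∫_γ w₁⋯w_i)(∫_μ w_{i+1}⋯w_r)` (the empty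
iterated integral being `1`). -/
theorem iteratedIntegral_pathTrans
    {E : Type*} [NormedAddCommGroup E] [NormedSpace ℝ E]
    (r : ℕ) (w : Fin r → (E → E →L[ℝ] ℝ)) (γ μ : ℝ → E)
    (hw : ∀ i, Continuous fun p : E × E => w i p.1 p.2)
    (hγ : ContDiff ℝ 1 γ) (hμ : ContDiff ℝ 1 μ) (hγμ : γ 1 = μ 0) :
    iteratedIntegral r w (pathTrans γ μ) =
      ∑ i : Fin (r + 1),
        iteratedIntegral (i : ℕ)
            (fun j => w (Fin.castLE (Nat.lt_succ_iff.mp i.isLt) j)) γ *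
          iteratedIntegral (r - (i : ℕ))
            (fun j => w ⟨(i : ℕ) + (j : ℕ), by
                have hj := j.isLt; have hi := i.isLt; omega⟩) μ := by
  have h1 : iteratedIntegral r w (pathTrans γ μ) = ∫ t in IIaux.S r, IIaux.Fq w γ μ t :=
    MeasureTheory.integral_congr_ae
      (MeasureTheory.ae_restrict_of_ae (IIaux.Fp_ae_eq_Fq hγ hμ))
  have h2 : ∫ t in IIaux.S r, IIaux.Fq w γ μ t
      = ∑ k : Fin (r+1), ∫ t in IIaux.P r (k : ℕ), IIaux.Fq w γ μ t := by
    have hint : MeasureTheory.IntegrableOn (IIaux.Fq w γ μ)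
        (⋃ k : Fin (r+1), IIaux.P r (k : ℕ)) := by
      rw [← IIaux.S_eq_iUnion r]
      exact IIaux.integrableOn_Fq hw hγ hμ (IIaux.measurableSet_S r) (IIaux.S_subset_uBox r)
    rw [IIaux.S_eq_iUnion r, MeasureTheory.integral_iUnion
      (fun k : Fin (r+1) => IIaux.measurableSet_P r (k : ℕ))
      (IIaux.pairwise_disjoint_P r) hint, tsum_fintype]
  rw [h1, h2]
  refine Finset.sum_congr rfl fun k _ => ?_
  have hk : (k : ℕ) ≤ r := Nat.lt_succ_iff.mp k.isLt
  rw [IIaux.cell_step1 hγ hμ hk, IIaux.cell_step2 hk]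
  rfl
end
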